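/- arXiv:1708.06340 — 3 statements merged into one kernel-verified Lean document; each statement's English description precedes it below -/
import Mathlib

section
/- For every integer n ≥ 0, the sum over all ordered compositions (k_1,...,k_t) of n with each k_i ≥ 2 of the quantity (n! / (k_1! ⋯ k_t!)) · (k_1 - 1)(k_2 - 1)⋯(k_t - 1) equals the number of derangements of n elements. -/
/-!
Classifying the permutations of an `n`-set by their fixed-point set gives
`∑ₖ C(n, k) D(n - k) = n!`; combined with `k C(n, k) = n C(n - 1, k - 1)` this yields the
recurrence `D(n + 1) = ∑ₖ C(n + 1, k + 1) · k · D(n - k)`. Splitting off the first part of a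
composition shows that the composition sum satisfies the same recurrence, with the part `k + 1`
carrying the weight `(k + 1) - 1 = k`. Parts equal to `1` have weight `0`, so the restriction to
parts `≥ 2` is immaterial.
-/

open Finset Equiv Function

namespace Composition

theorem blocks_ne_nil {n : ℕ} (c : Composition (n + 1)) : c.blocks ≠ [] := by
  simp [c.blocks_eq_nil]

theorem head_blocks_add_sum_tail {n : ℕ} (c : Composition (n + 1)) :
    c.blocks.head c.blocks_ne_nil + c.blocks.tail.sum = n + 1 := by
  rw [← List.sum_cons, List.cons_head_tail, c.blocks_sum]

def consEquiv (n : ℕ) : (Σ k : Fin (n + 1), Composition (n - k)) ≃ Composition (n + 1) where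
  toFun p :=
    { blocks := (p.1 + 1) :: p.2.blocks
      blocks_pos := by
        simp only [List.mem_cons, forall_eq_or_imp]
        exact ⟨Nat.succ_pos _, fun _ => p.2.blocks_pos⟩
      blocks_sum := by
        rw [List.sum_cons, p.2.blocks_sum]; omega }
  invFun c :=
    ⟨⟨c.blocks.head c.blocks_ne_nil - 1, by have := c.head_blocks_add_sum_tail; omega⟩,
      { blocks := c.blocks.tail
        blocks_pos := fun h => c.blocks_pos (List.mem_of_mem_tail h)
        blocks_sum := by
          have := c.head_blocks_add_sum_tail
          have := c.blocks_pos (List.head_mem c.blocks_ne_nil)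
          dsimp only; omega }⟩
  left_inv _ := rfl
  right_inv c := by
    ext1
    dsimp only
    rw [Nat.sub_add_cancel (c.blocks_pos (List.head_mem c.blocks_ne_nil)), List.cons_head_tail]

theorem sum_succ_eq_sum_cons {M : Type*} [AddCommMonoid M] (n : ℕ) (f : List ℕ → M) :
    ∑ c : Composition (n + 1), f c.blocks =
      ∑ k ∈ range (n + 1), ∑ c : Composition (n - k), f ((k + 1) :: c.blocks) := by
  rw [← (consEquiv n).sum_comp, Fintype.sum_sigma]
  exact Fin.sum_univ_eq_sum_range (fun k => ∑ c : Composition (n - k), f ((k + 1) :: c.blocks)) _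

end Composition

theorem List.prod_map_factorial_mul_multinomial (l : List ℕ) :
    (l.map Nat.factorial).prod * l.multinomial = l.sum.factorial := by
  induction l with
  | nil => rfl
  | cons k l ih =>
    rw [List.map_cons, List.prod_cons, List.multinomial_cons, List.sum_cons, Nat.choose_symm_add,
      ← Nat.add_choose_mul_factorial_mul_factorial k l.sum, ← ih]
    ring

theorem List.multinomial_eq_factorial_div (l : List ℕ) :
    l.multinomial = l.sum.factorial / (l.map Nat.factorial).prod :=
  Nat.eq_div_of_mul_eq_right (by simp [List.prod_eq_zero_iff, Nat.factorial_ne_zero])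
    l.prod_map_factorial_mul_multinomial

theorem card_perm_eq_sum_numDerangements_card_compl (α : Type*) [Fintype α] [DecidableEq α] :
    Fintype.card (Perm α) = ∑ s : Finset α, numDerangements #sᶜ := by
  rw [← Finset.card_univ, Finset.card_eq_sum_card_fiberwise
    (f := fun f : Perm α => ({a | f a = a} : Finset α)) (t := univ) (by simp)]
  refine sum_congr rfl fun s _ => ?_
  calc #{f : Perm α | ({a | f a = a} : Finset α) = s}
      = Fintype.card {f : Perm α // ∀ a, a ∉ sᶜ ↔ a ∈ fixedPoints f} := by
        rw [Fintype.card_subtype]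
        congr 1; ext f
        simp [Finset.ext_iff, eq_comm, IsFixedPt]
    _ = Fintype.card (derangements {a // a ∈ sᶜ}) :=
        (Fintype.card_congr (derangements.subtypeEquiv _)).symm
    _ = numDerangements #sᶜ := by
        rw [card_derangements_eq_numDerangements, Fintype.card_coe]

theorem sum_choose_mul_numDerangements_sub (n : ℕ) :
    ∑ k ∈ range (n + 1), n.choose k * numDerangements (n - k) = n.factorial := by
  have h := card_perm_eq_sum_numDerangements_card_compl (Fin n)
  simp only [Fintype.card_perm, Fintype.card_fin, card_compl] at h
  rw [h, ← Finset.powerset_univ, sum_powerset_apply_card (fun k => numDerangements (n - k)),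
    card_univ, Fintype.card_fin]
  simp only [smul_eq_mul]

theorem numDerangements_succ_eq_sum (n : ℕ) :
    numDerangements (n + 1) =
      ∑ k ∈ range (n + 1), (n + 1).choose (k + 1) * k * numDerangements (n - k) := by
  have hfac := sum_choose_mul_numDerangements_sub (n + 1)
  rw [sum_range_succ'] at hfac
  simp only [Nat.add_sub_add_right, Nat.choose_zero_right, one_mul, Nat.sub_zero] at hfac
  have hweighted : ∑ k ∈ range (n + 1), (n + 1).choose (k + 1) * (k + 1) * numDerangements (n - k)
      = (n + 1).factorial := by
    simp_rw [← Nat.add_one_mul_choose_eq, mul_assoc, ← mul_sum, sum_choose_mul_numDerangements_sub,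
      Nat.factorial_succ]
  simp only [mul_add_one, add_mul, sum_add_distrib] at hweighted
  omega

section CompositionSum

variable {R : Type*} [CommSemiring R]

/-- The coefficient of `xⁿ / n!` in `1 / (1 - ∑_{k ≥ 1} w k · xᵏ / k!)`. -/
def compositionSum (w : ℕ → R) (n : ℕ) : R :=
  ∑ c : Composition n, (c.blocks.multinomial : R) * (c.blocks.map w).prod

theorem compositionSum_zero (w : ℕ → R) : compositionSum w 0 = 1 := by
  have hnil (c : Composition 0) : c.blocks = [] := c.blocks_eq_nil.2 rfl
  rw [compositionSum, Fintype.sum_eq_single (Composition.ones 0)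
    fun c hc => (hc (Composition.ext ((hnil c).trans (hnil _).symm))).elim, hnil,
    List.map_nil, List.prod_nil, mul_one, show ([] : List ℕ).multinomial = 1 from rfl,
    Nat.cast_one]

theorem compositionSum_succ (w : ℕ → R) (n : ℕ) :
    compositionSum w (n + 1) =
      ∑ k ∈ range (n + 1), ((n + 1).choose (k + 1) : R) * w (k + 1) * compositionSum w (n - k) := by
  rw [compositionSum,
    Composition.sum_succ_eq_sum_cons n fun l => (l.multinomial : R) * (l.map w).prod]
  refine sum_congr rfl fun k hk => ?_
  rw [compositionSum, mul_sum]
  refine sum_congr rfl fun c _ => ?_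
  rw [List.multinomial_cons, c.blocks_sum, show k + 1 + (n - k) = n + 1 by grind]
  simp only [List.map_cons, List.prod_cons, Nat.cast_mul]
  ring

end CompositionSum

theorem compositionSum_sub_one_eq_numDerangements (n : ℕ) :
    compositionSum (· - 1) n = numDerangements n := by
  induction n using Nat.strong_induction_on with
  | _ n ih =>
    match n with
    | 0 => rw [compositionSum_zero, numDerangements_zero]
    | n + 1 =>
      rw [compositionSum_succ, numDerangements_succ_eq_sum]
      refine sum_congr rfl fun k hk => ?_
      rw [Nat.cast_id, Nat.add_sub_cancel, ih (n - k) (by omega)]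

theorem composition_sum_eq_card_derangements (n : ℕ) :
    ∑ c ∈ Finset.univ.filter (fun c : Composition n => ∀ k ∈ c.blocks, 2 ≤ k),
      (Nat.factorial n / (c.blocks.map Nat.factorial).prod) *
        (c.blocks.map (fun k => k - 1)).prod
      = Nat.card (derangements (Fin n)) := by
  rw [sum_filter_of_ne]
  · rw [Nat.card_eq_fintype_card, card_derangements_fin_eq_numDerangements,
      ← compositionSum_sub_one_eq_numDerangements]
    refine sum_congr rfl fun c _ => ?_
    rw [Nat.cast_id, List.multinomial_eq_factorial_div, c.blocks_sum]
  · intro c _ hc k hk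
    have hk_pos := c.one_le_blocks hk
    have hk_pred : k - 1 ≠ 0 := fun h =>
      hc (mul_eq_zero_of_right _ (List.prod_eq_zero (List.mem_map.2 ⟨k, hk, h⟩)))
    omega
end

section
/- For n = 2r + 1 odd, the topological Euler characteristic of the GIT quotient Z_n = (P^1)^n //_{O(1,...,1)} Gm satisfies e(Z_n) = n · binomial(n−1, r) = ∑_{j=0}^{r} (n − 2j) · binomial(n, j). -/
/-!
An edge of the cube `{0,1}^n` is encoded by its lower endpoint `v` and its direction `i`
(so `v i = false`). For `n = 2r + 1` it crosses the bisecting hyperplane exactly when `v` has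
`r` ones, so there are `C(n, r)` choices of `v` and `n - r` of `i`, and
`(n - r)·C(n, r) = n·C(n-1, r)`. The sum telescopes, because
`(n - 2j)·C(n, j) = (n - j)·C(n, j) - j·C(n, j) = n·C(n-1, j) - n·C(n-1, j-1)`.
-/

open Finset

section BoolCube

variable {α : Type*} [Fintype α]

lemma card_filter_false_eq_sub (v : α → Bool) :
    #{i | v i = false} = Fintype.card α - #{i | v i = true} := by
  have := card_filter_add_card_filter_not (s := univ) (fun i => v i = true)
  simp only [Bool.not_eq_true, card_univ] at this
  omega

variable [DecidableEq α]

lemma card_filter_card_true_eq (r : ℕ) :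
    #{v : α → Bool | #{i | v i = true} = r} = (Fintype.card α).choose r := by
  rw [← card_univ, ← card_powersetCard]
  refine card_nbij' (fun v => ({i | v i = true} : Finset α)) (fun s i => decide (i ∈ s))
    ?_ ?_ ?_ ?_
  · intro v hv
    simpa using hv
  · intro s hs
    simpa using hs
  · intro v _
    funext i
    simp
  · intro s _
    ext i
    simp

lemma card_cube_edges_from_level (r : ℕ) :
    #{p : (α → Bool) × α | p.1 p.2 = false ∧ #{i | p.1 i = true} = r}
      = (Fintype.card α).choose r * (Fintype.card α - r) := by
  calc _ = ∑ v : α → Bool with #{i | v i = true} = r, #{i | v i = false} := by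
        rw [card_filter, Fintype.sum_prod_type, sum_filter]
        refine sum_congr rfl fun v _ => ?_
        split_ifs with hv <;>
          simp only [hv, and_true, and_false, if_false, sum_const_zero, ← card_filter]
    _ = ∑ v : α → Bool with #{i | v i = true} = r, (Fintype.card α - r) :=
        sum_congr rfl fun v hv => by rw [card_filter_false_eq_sub, (mem_filter.1 hv).2]
    _ = _ := by rw [sum_const, card_filter_card_true_eq, smul_eq_mul]

end BoolCube

lemma mul_choose_pred_eq (n r : ℕ) : n * (n - 1).choose r = (n - r) * n.choose r := by
  rcases n with _ | m
  · simp
  · simpa [mul_comm] using Nat.choose_mul_succ_eq m r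

lemma sum_range_sub_two_mul_mul_choose (n r : ℕ) (h : 2 * r ≤ n) :
    ∑ j ∈ range (r + 1), (n - 2 * j) * n.choose j = n * (n - 1).choose r := by
  induction r with
  | zero => simp
  | succ r ih =>
    obtain ⟨m, rfl⟩ : ∃ m, n = m + 1 := ⟨n - 1, by omega⟩
    rw [sum_range_succ, ih (by omega), Nat.add_sub_cancel, Nat.add_one_mul_choose_eq,
      mul_comm (m + 1) (m.choose _), Nat.choose_mul_succ_eq, mul_comm (m + 1 - _), ← mul_add]
    congr 1
    omega

theorem euler_char_git_quotient_odd (n r : ℕ) (h : n = 2 * r + 1) :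
    (Finset.univ.filter (fun p : (Fin n → Bool) × Fin n =>
        p.1 p.2 = false ∧
          (Finset.univ.filter (fun i => p.1 i = true)).card = r)).card
      = n * (n - 1).choose r ∧
    n * (n - 1).choose r = ∑ j ∈ Finset.range (r + 1), (n - 2 * j) * n.choose j := by
  refine ⟨?_, (sum_range_sub_two_mul_mul_choose n r (by omega)).symm⟩
  rw [card_cube_edges_from_level, Fintype.card_fin, mul_choose_pred_eq, mul_comm]
end

section
/- Let i_1 < ... < i_k and suppose D_1, ..., D_s are divisors on a smooth projective variety such that the line bundles L, L|_{D_{j_1} ∩ ⋯ ∩ D_{j_m}} are acyclic for all subsets {j_1,...,j_m} ⊆ {i_1,...,i_k}. Then L ⊗ O(−D_{i_1} − ⋯ − D_{i_k}) is acyclic, by induction on k using the Koszul resolution 0 → O(−∑_{j∈I} D_j) → ⋯ → ⊕_{j∈I} O(−D_j) → O → O_{D_{i_1}∩⋯∩D_{i_k}} → 0 for transversally intersecting divisors. -/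
/-!
STATEMENT 19: Let `D_1, ..., D_k` be transversally intersecting (simple normal crossing)
divisors on a smooth projective variety and `L` a line bundle such that `L` and all the
restrictions `L|_{D_{j_1} ∩ ⋯ ∩ D_{j_m}}` (for all subsets `{j_1,...,j_m} ⊆ {1,...,k}`)
are acyclic.  Then `L ⊗ O(−D_1 − ⋯ − D_k)` is acyclic, by induction on `k` using the exact
Koszul resolution `0 → O(−∑ D_j) → ⋯ → ⊕_j O(−D_j) → O → O_{D_1 ∩ ⋯ ∩ D_k} → 0`.

Formalization: we work in the abelian category `A` of coherent sheaves on the variety.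
The object `M J T` denotes the twisted restriction `L(−∑_{j∈J} D_j)|_{∩_{t∈T} D_t}` for
disjoint `J, T ⊆ {1,...,k}`, so the hypothesis is the acyclicity of the `M ∅ T`, and the
conclusion is the acyclicity of `M {1,...,k} ∅ = L(−D_1−⋯−D_k)`.  The transversal Koszul
structure is encoded by the restriction short exact sequences
`0 → L(−∑_{J∪{i}} D)|_{∩_T D} → L(−∑_J D)|_{∩_T D} → L(−∑_J D)|_{∩_{T∪{i}} D} → 0`
(`hses`), and `Acyclic` (vanishing of all sheaf cohomology) satisfies the two-out-of-three
property along short exact sequences coming from the long exact cohomology sequence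
(`h23` states the direction that is used: if the middle and right terms are acyclic, so is
the left term).
-/

open CategoryTheory CategoryTheory.Limits Finset

theorem koszul_acyclicity
    (A : Type*) [Category A] [Abelian A]
    (Acyclic : A → Prop)
    (h23 : ∀ S : ShortComplex A, S.ShortExact → Acyclic S.X₂ → Acyclic S.X₃ → Acyclic S.X₁)
    (k : ℕ)
    (M : Finset (Fin k) → Finset (Fin k) → A)
    (hses : ∀ (J T : Finset (Fin k)), Disjoint J T → ∀ i : Fin k, i ∉ J → i ∉ T →
      ∃ (f : M (insert i J) T ⟶ M J T) (g : M J T ⟶ M J (insert i T)) (w : f ≫ g = 0),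
        (ShortComplex.mk f g w).ShortExact)
    (hL : ∀ T : Finset (Fin k), Acyclic (M ∅ T)) :
    Acyclic (M Finset.univ ∅) := by
  suffices h : ∀ n (J T : Finset (Fin k)), J.card = n → Disjoint J T → Acyclic (M J T) from
    h _ Finset.univ ∅ rfl (Finset.disjoint_empty_right _)
  intro n
  induction n with
  | zero =>
    intro J T hJ _
    rw [Finset.card_eq_zero] at hJ
    subst hJ
    exact hL T
  | succ n ih =>
    intro J T hJ hdisj
    obtain ⟨i, hi⟩ := Finset.card_pos.mp (by omega : 0 < J.card)
    set J' := J.erase i with hJ'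
    have hiJ' : i ∉ J' := Finset.notMem_erase i J
    have hins : insert i J' = J := Finset.insert_erase hi
    have hiT : i ∉ T := Finset.disjoint_left.mp hdisj hi
    have hdisj' : Disjoint J' T := Finset.disjoint_of_subset_left (Finset.erase_subset i J) hdisj
    obtain ⟨f, g, w, hse⟩ := hses J' T hdisj' i hiJ' hiT
    have hcard : J'.card = n := by
      rw [hJ', Finset.card_erase_of_mem hi, hJ]; rfl
    have h2 : Acyclic (M J' T) := ih J' T hcard hdisj'
    have h3 : Acyclic (M J' (insert i T)) := ih J' (insert i T) hcard (by
      rw [Finset.disjoint_insert_right]; exact ⟨hiJ', hdisj'⟩)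
    have h1 := h23 _ hse h2 h3
    rw [← hins]
    exact h1
end
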